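/- (Corollary: polynomial-in-rounds generalization error bound.) Let ν be a probability measure on ℝ^{d_0} such that ν-almost every x satisfies x_i ∈ [0, 1] for every coordinate i, let q and p_1, …, p_N be conditional label distributions over ν, and let n_1, …, n_N > 0 with n = ∑_{k=1}^{N} n_k. Let θ : ℕ → (parameters of an L-layer ReLU network with C output nodes) be a parameter trajectory (θ(t) the global-model parameters after communication round t), and suppose there exist a constant C_0 ≥ 0 and a number of local epochs E ∈ ℕ such that ‖f(·; θ(t))‖_pnp ≤ C_0 · t^{E·L} for all t ≥ 1. Then for every communication round t ≥ 1, | ∑_{k=1}^{N} (n_k/n) L(f(·; θ(t)), p_k) − L(f(·; θ(t)), q) | ≤ C_0 · t^{E·L} · ∑_{k=1}^{N} (n_k/n) ∫ ∑_{i=1}^{C} | p_k x i − q x i | dν(x). -/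

import Mathlib

/-!
On inputs in `[0, 1]^{d₀}` an induction over the layers, using `|max 0 t| ≤ |t|`, bounds every
output of the network by the sum, over the paths ending at it, of the products of the absolute
weights along the path; hence every logit is bounded by the path-norm proxy, so by
`B = C₀ t^{EL}`. With logits bounded by `B`, the log-partition term of the cross-entropy does not
depend on the label and cancels between two label distributions of total mass one, leaving
`|L(f, p) - L(f, q)| ≤ ∫ |∑ᵢ (q - p) f| ≤ B ∫ ∑ᵢ |p - q|`. Averaging over the clients with the
weights `n_k / n` gives the bound.
-/

open MeasureTheory Real Finset

/-- Pre-activations of a ReLU network with layer widths `d` and parameters `θ`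
(`θ l i j` is the weight of the edge from node `i` of layer `l` to node `j` of
layer `l+1`) on input `x`.  `preact d θ x l` is the pre-activation vector
`a_{l+1}` of layer `l+1` (paper indexing): `a_1 j = ∑ i, θ 0 i j * x i` and
`a_{l+2} j = ∑ i, θ (l+1) i j * σ (a_{l+1} i)` where `σ t = max 0 t` is ReLU.
For an `L`-layer network (`L ≥ 1`) the `k`-th output is
`f_k(x; θ) = ∑ i, θ L i k * σ (a_L i) = preact d θ x L k`. -/
noncomputable def preact (d : ℕ → ℕ) (θ : ∀ l : ℕ, Fin (d l) → Fin (d (l + 1)) → ℝ)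
    (x : Fin (d 0) → ℝ) : (l : ℕ) → Fin (d (l + 1)) → ℝ
  | 0 => fun j => ∑ i, θ 0 i j * x i
  | (l + 1) => fun j => ∑ i, θ (l + 1) i j * max 0 (preact d θ x l i)

/-- The path-norm proxy of an `L`-layer ReLU network:
`‖f(·; θ)‖_pnp = ∑_{(i_0, …, i_{L+1})} ∏_{l=0}^{L} |θ_l(i_l, i_{l+1})|`,
the sum ranging over all paths through the network. -/
noncomputable def pathNormProxy (L : ℕ) (d : ℕ → ℕ)
    (θ : ∀ l : ℕ, Fin (d l) → Fin (d (l + 1)) → ℝ) : ℝ :=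
  ∑ i : (l : Fin (L + 2)) → Fin (d l), ∏ l : Fin (L + 1), |θ l (i l.castSucc) (i l.succ)|

/-- The cross-entropy loss of classifier `f` at point `(x, i)`:
`ℓ_f(x, i) = log (∑ r, exp (f x r)) − f x i`. -/
noncomputable def crossEntropyLoss {𝒳 : Type*} {C : ℕ} (f : 𝒳 → Fin C → ℝ)
    (x : 𝒳) (i : Fin C) : ℝ :=
  Real.log (∑ r, Real.exp (f x r)) - f x i

/-- The risk of classifier `f` under feature distribution `ν` and conditional label
distribution `p`: `L(f, p) = ∫ ∑ i, p x i · ℓ_f(x, i) dν(x)`. -/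
noncomputable def risk {𝒳 : Type*} [MeasurableSpace 𝒳] {C : ℕ} (ν : Measure 𝒳)
    (f : 𝒳 → Fin C → ℝ) (p : 𝒳 → Fin C → ℝ) : ℝ :=
  ∫ x, ∑ i, p x i * crossEntropyLoss f x i ∂ν

theorem Fin.sum_pi_eq_sum_sum_snoc {M : Type*} [AddCommMonoid M] {m : ℕ}
    {α : Fin (m + 1) → Type*} [∀ i, Fintype (α i)] (f : (∀ i, α i) → M) :
    ∑ g, f g = ∑ a : α (Fin.last m), ∑ g : ∀ i : Fin m, α i.castSucc, f (Fin.snoc g a) := by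
  rw [← Fintype.sum_prod_type']
  exact (Fintype.sum_equiv (Fin.snocEquiv α) _ _ fun _ => rfl).symm

section PathNorm

variable {d : ℕ → ℕ} (θ : ∀ l : ℕ, Fin (d l) → Fin (d (l + 1)) → ℝ)

noncomputable def absPathSum : (l : ℕ) → Fin (d (l + 1)) → ℝ
  | 0 => fun j => ∑ i, |θ 0 i j|
  | (l + 1) => fun j => ∑ i, |θ (l + 1) i j| * absPathSum l i

theorem absPathSum_nonneg : ∀ l j, 0 ≤ absPathSum θ l j
  | 0, _ => sum_nonneg fun _ _ => abs_nonneg _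
  | l + 1, _ => sum_nonneg fun i _ => mul_nonneg (abs_nonneg _) (absPathSum_nonneg l i)

theorem abs_preact_le_absPathSum {x : Fin (d 0) → ℝ} (hx : ∀ i, |x i| ≤ 1) :
    ∀ l j, |preact d θ x l j| ≤ absPathSum θ l j
  | 0, j => calc
      |∑ i, θ 0 i j * x i| ≤ ∑ i, |θ 0 i j| * |x i| :=
        (abs_sum_le_sum_abs _ _).trans_eq (sum_congr rfl fun _ _ => abs_mul _ _)
      _ ≤ ∑ i, |θ 0 i j| := sum_le_sum fun i _ => mul_le_of_le_one_right (abs_nonneg _) (hx i)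
  | l + 1, j => calc
      |∑ i, θ (l + 1) i j * max 0 (preact d θ x l i)|
          ≤ ∑ i, |θ (l + 1) i j| * |max 0 (preact d θ x l i)| :=
        (abs_sum_le_sum_abs _ _).trans_eq (sum_congr rfl fun _ _ => abs_mul _ _)
      _ ≤ ∑ i, |θ (l + 1) i j| * absPathSum θ l i := by
        refine sum_le_sum fun i _ => mul_le_mul_of_nonneg_left ?_ (abs_nonneg _)
        rw [abs_of_nonneg (le_max_left _ _)]
        exact max_le (absPathSum_nonneg θ l i)
          ((le_abs_self _).trans (abs_preact_le_absPathSum hx l i))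

theorem absPathSum_eq_sum_paths : ∀ (m : ℕ) (j : Fin (d (m + 1))),
    absPathSum θ m j = ∑ g : ∀ l : Fin (m + 1), Fin (d l),
      (∏ l : Fin m, |θ l (g l.castSucc) (g l.succ)|) * |θ m (g (Fin.last m)) j|
  | 0, j => by
    rw [Fin.sum_pi_eq_sum_sum_snoc]
    simp only [absPathSum, Fin.prod_univ_zero, one_mul, Fintype.sum_unique, Fin.snoc_last,
      Fin.val_last]
  | m + 1, j => by
    rw [Fin.sum_pi_eq_sum_sum_snoc]
    simp only [absPathSum, absPathSum_eq_sum_paths m, mul_sum, Fin.prod_univ_castSucc,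
      Fin.succ_castSucc, Fin.succ_last, Fin.snoc_castSucc, Fin.snoc_last, Fin.val_castSucc,
      Fin.val_last]
    exact sum_congr rfl fun _ _ => sum_congr rfl fun _ _ => by ring

theorem sum_absPathSum_eq_pathNormProxy (L : ℕ) :
    ∑ j, absPathSum θ L j = pathNormProxy L d θ := by
  rw [pathNormProxy, Fin.sum_pi_eq_sum_sum_snoc]
  refine sum_congr rfl fun a _ => ?_
  rw [absPathSum_eq_sum_paths]
  refine sum_congr rfl fun g _ => ?_
  simp only [Fin.prod_univ_castSucc, Fin.succ_castSucc, Fin.succ_last, Fin.snoc_castSucc,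
    Fin.snoc_last, Fin.val_castSucc, Fin.val_last]

theorem abs_preact_le_pathNormProxy {x : Fin (d 0) → ℝ} (hx : ∀ i, |x i| ≤ 1) (L : ℕ)
    (k : Fin (d (L + 1))) : |preact d θ x L k| ≤ pathNormProxy L d θ := calc
  |preact d θ x L k| ≤ absPathSum θ L k := abs_preact_le_absPathSum θ hx L k
  _ ≤ ∑ j, absPathSum θ L j := single_le_sum (fun j _ => absPathSum_nonneg θ L j) (mem_univ k)
  _ = pathNormProxy L d θ := sum_absPathSum_eq_pathNormProxy θ L

theorem measurable_preact : ∀ l j, Measurable fun x => preact d θ x l j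
  | 0, _ => Finset.measurable_sum _ fun i _ => (measurable_pi_apply i).const_mul _
  | l + 1, _ => Finset.measurable_sum _ fun i _ =>
    (measurable_const.max (measurable_preact l i)).const_mul _

end PathNorm

theorem abs_log_sum_exp_le {ι : Type*} [Fintype ι] [Nonempty ι] {v : ι → ℝ} {B : ℝ}
    (hv : ∀ r, |v r| ≤ B) : |Real.log (∑ r, Real.exp (v r))| ≤ Real.log (Fintype.card ι) + B := by
  obtain ⟨r₀⟩ := ‹Nonempty ι›
  have hupper : ∑ r, Real.exp (v r) ≤ Fintype.card ι * Real.exp B := by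
    simpa using sum_le_sum fun r (_ : r ∈ univ) => Real.exp_le_exp.2 ((le_abs_self _).trans (hv r))
  have hlower : Real.exp (-B) ≤ ∑ r, Real.exp (v r) :=
    (Real.exp_le_exp.2 (neg_le.1 ((neg_le_abs _).trans (hv r₀)))).trans
      (single_le_sum (fun r _ => (Real.exp_pos (v r)).le) (mem_univ r₀))
  have hpos := (Real.exp_pos _).trans_le hlower
  have hcard : (0 : ℝ) < Fintype.card ι := by exact_mod_cast Fintype.card_pos
  have h₁ := Real.log_le_log hpos hupper
  have h₂ := Real.log_le_log (Real.exp_pos _) hlower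
  rw [Real.log_mul hcard.ne' (Real.exp_ne_zero _), Real.log_exp] at h₁
  rw [Real.log_exp] at h₂
  have := Real.log_nonneg (by exact_mod_cast Fintype.card_pos : (1 : ℝ) ≤ Fintype.card ι)
  exact abs_le.2 ⟨by linarith, h₁⟩

section Risk

variable {𝒳 : Type*} {C : ℕ}

theorem abs_crossEntropyLoss_le [NeZero C] {f : 𝒳 → Fin C → ℝ} {x : 𝒳} {B : ℝ}
    (hf : ∀ r, |f x r| ≤ B) (i : Fin C) :
    |crossEntropyLoss f x i| ≤ Real.log C + 2 * B := by
  have hlse := abs_log_sum_exp_le hf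
  rw [Fintype.card_fin] at hlse
  calc |crossEntropyLoss f x i| ≤ |Real.log (∑ r, Real.exp (f x r))| + |f x i| := abs_sub _ _
    _ ≤ Real.log C + 2 * B := by linarith [hf i]

theorem sum_mul_crossEntropyLoss_sub_sum_mul (f : 𝒳 → Fin C → ℝ) (x : 𝒳) {p q : Fin C → ℝ}
    (h : ∑ i, p i = ∑ i, q i) :
    ∑ i, p i * crossEntropyLoss f x i - ∑ i, q i * crossEntropyLoss f x i =
      ∑ i, (q i - p i) * f x i := by
  simp only [crossEntropyLoss, mul_sub, sum_sub_distrib, ← sum_mul, h, sub_mul]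
  ring

variable [MeasurableSpace 𝒳] {ν : Measure 𝒳}

structure IsCondLabelDist (ν : Measure 𝒳) (p : 𝒳 → Fin C → ℝ) : Prop where
  measurable : Measurable p
  nonneg : ∀ x i, 0 ≤ p x i
  ae_sum_eq_one : ∀ᵐ x ∂ν, ∑ i, p x i = 1

theorem IsCondLabelDist.integrable_apply [IsFiniteMeasure ν] {p : 𝒳 → Fin C → ℝ}
    (hp : IsCondLabelDist ν p) (i : Fin C) : Integrable (fun x => p x i) ν := by
  refine .of_bound ((measurable_pi_apply i).comp hp.measurable).aestronglyMeasurable 1 ?_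
  filter_upwards [hp.ae_sum_eq_one] with x hx
  rw [Real.norm_of_nonneg (hp.nonneg x i), ← hx]
  exact single_le_sum (fun r _ => hp.nonneg x r) (mem_univ i)

theorem measurable_crossEntropyLoss {f : 𝒳 → Fin C → ℝ} (hf : ∀ i, Measurable fun x => f x i)
    (i : Fin C) : Measurable fun x => crossEntropyLoss f x i :=
  (Finset.measurable_sum _ fun r _ => (hf r).exp).log.sub (hf i)

theorem integrable_sum_mul_crossEntropyLoss [IsFiniteMeasure ν] [NeZero C]
    {f : 𝒳 → Fin C → ℝ} (hf : ∀ i, Measurable fun x => f x i) {B : ℝ}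
    (hfB : ∀ᵐ x ∂ν, ∀ i, |f x i| ≤ B) {p : 𝒳 → Fin C → ℝ} (hp : IsCondLabelDist ν p) :
    Integrable (fun x => ∑ i, p x i * crossEntropyLoss f x i) ν :=
  integrable_finsetSum _ fun i _ =>
    (hp.integrable_apply i).mul_bdd (measurable_crossEntropyLoss hf i).aestronglyMeasurable
      (hfB.mono fun _ hx => abs_crossEntropyLoss_le hx i)

theorem abs_risk_sub_risk_le [IsFiniteMeasure ν] [NeZero C]
    {f : 𝒳 → Fin C → ℝ} (hf : ∀ i, Measurable fun x => f x i) {B : ℝ}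
    (hfB : ∀ᵐ x ∂ν, ∀ i, |f x i| ≤ B) {p q : 𝒳 → Fin C → ℝ}
    (hp : IsCondLabelDist ν p) (hq : IsCondLabelDist ν q) :
    |risk ν f p - risk ν f q| ≤ B * ∫ x, ∑ i, |p x i - q x i| ∂ν := by
  have hdist : Integrable (fun x => ∑ i, |p x i - q x i|) ν :=
    integrable_finsetSum _ fun i _ => ((hp.integrable_apply i).sub (hq.integrable_apply i)).abs
  rw [risk, risk, ← integral_sub (integrable_sum_mul_crossEntropyLoss hf hfB hp)
    (integrable_sum_mul_crossEntropyLoss hf hfB hq), ← integral_const_mul (μ := ν) B,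
    ← Real.norm_eq_abs]
  refine norm_integral_le_of_norm_le (hdist.const_mul B) ?_
  filter_upwards [hfB, hp.ae_sum_eq_one, hq.ae_sum_eq_one] with x hx hpx hqx
  rw [Real.norm_eq_abs, sum_mul_crossEntropyLoss_sub_sum_mul f x (hpx.trans hqx.symm), mul_sum]
  refine (abs_sum_le_sum_abs _ _).trans (sum_le_sum fun i _ => ?_)
  rw [abs_mul, abs_sub_comm, mul_comm]
  exact mul_le_mul_of_nonneg_right (hx i) (abs_nonneg _)

end Risk

theorem abs_sum_mul_sub_le_sum_mul {ι : Type*} {s : Finset ι} {w a c : ι → ℝ} {b : ℝ}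
    (hw₀ : ∀ k ∈ s, 0 ≤ w k) (hw₁ : ∑ k ∈ s, w k = 1) (h : ∀ k ∈ s, |a k - b| ≤ c k) :
    |∑ k ∈ s, w k * a k - b| ≤ ∑ k ∈ s, w k * c k := by
  have hcomb : ∑ k ∈ s, w k * a k - b = ∑ k ∈ s, w k * (a k - b) := by
    simp only [mul_sub, sum_sub_distrib, ← sum_mul, hw₁, one_mul]
  rw [hcomb]
  refine (abs_sum_le_sum_abs _ _).trans (sum_le_sum fun k hk => ?_)
  rw [abs_mul, abs_of_nonneg (hw₀ k hk)]
  exact mul_le_mul_of_nonneg_left (h k hk) (hw₀ k hk)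

theorem generalization_error_bound_poly_rounds_general
    (L : ℕ) (d : ℕ → ℕ) (hC : 1 ≤ d (L + 1))
    (θ : ℕ → ∀ l : ℕ, Fin (d l) → Fin (d (l + 1)) → ℝ)
    (ν : Measure (Fin (d 0) → ℝ)) [IsProbabilityMeasure ν]
    (hν : ∀ᵐ x ∂ν, ∀ i, x i ∈ Set.Icc (0 : ℝ) 1)
    (N : ℕ) (hN : 1 ≤ N)
    (p : Fin N → (Fin (d 0) → ℝ) → Fin (d (L + 1)) → ℝ)
    (q : (Fin (d 0) → ℝ) → Fin (d (L + 1)) → ℝ)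
    (hpm : ∀ k, Measurable (p k)) (hqm : Measurable q)
    (hp0 : ∀ k x i, 0 ≤ p k x i) (hq0 : ∀ x i, 0 ≤ q x i)
    (hp1 : ∀ k, ∀ᵐ x ∂ν, ∑ i, p k x i = 1) (hq1 : ∀ᵐ x ∂ν, ∑ i, q x i = 1)
    (n : Fin N → ℕ) (hn : ∀ k, 0 < n k)
    (C₀ : ℝ) (E : ℕ)
    (hpoly : ∀ t : ℕ, 1 ≤ t → pathNormProxy L d (θ t) ≤ C₀ * (t : ℝ) ^ (E * L)) :
    ∀ t : ℕ, 1 ≤ t →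
      |∑ k, ((n k : ℝ) / (∑ j, (n j : ℝ))) * risk ν (fun x => preact d (θ t) x L) (p k)
          - risk ν (fun x => preact d (θ t) x L) q|
        ≤ C₀ * (t : ℝ) ^ (E * L) * ∑ k, ((n k : ℝ) / (∑ j, (n j : ℝ))) *
            ∫ x, ∑ i, |p k x i - q x i| ∂ν := by
  intro t ht
  have : NeZero (d (L + 1)) := ⟨by omega⟩
  have hn_sum : 0 < ∑ j, (n j : ℝ) :=
    sum_pos (fun j _ => Nat.cast_pos.2 (hn j)) ⟨⟨0, hN⟩, mem_univ _⟩
  have houtput : ∀ᵐ x ∂ν, ∀ i, |preact d (θ t) x L i| ≤ C₀ * (t : ℝ) ^ (E * L) := by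
    filter_upwards [hν] with x hx i
    refine (abs_preact_le_pathNormProxy (θ t) (fun j => ?_) L i).trans (hpoly t ht)
    exact abs_le.2 ⟨by linarith [(hx j).1], (hx j).2⟩
  calc _ ≤ ∑ k, (n k : ℝ) / (∑ j, (n j : ℝ)) *
        (C₀ * (t : ℝ) ^ (E * L) * ∫ x, ∑ i, |p k x i - q x i| ∂ν) :=
      abs_sum_mul_sub_le_sum_mul (fun k _ => by positivity)
        (by rw [← sum_div, div_self hn_sum.ne']) fun k _ =>
        abs_risk_sub_risk_le (measurable_preact (θ t) L) houtput ⟨hpm k, hp0 k, hp1 k⟩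
          ⟨hqm, hq0, hq1⟩
    _ = _ := by simp_rw [mul_sum, mul_left_comm]

/-- **Corollary (polynomial-in-rounds generalization error bound).**
`θ t` are the global ReLU-network parameters after communication round `t`.  If the
path-norm proxy grows at most polynomially, `‖f(·; θ(t))‖_pnp ≤ C₀ · t^{E·L}` for all
`t ≥ 1` (`E` the number of local epochs, `L` the number of layers), then for every
round `t ≥ 1` the generalization error of the global model is bounded by
`C₀ · t^{E·L}` times the weighted total label-noise term. -/
theorem generalization_error_bound_poly_rounds
    (L : ℕ) (hL : 1 ≤ L) (d : ℕ → ℕ) (hC : 1 ≤ d (L + 1))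
    (θ : ℕ → ∀ l : ℕ, Fin (d l) → Fin (d (l + 1)) → ℝ)
    (ν : Measure (Fin (d 0) → ℝ)) [IsProbabilityMeasure ν]
    (hν : ∀ᵐ x ∂ν, ∀ i, x i ∈ Set.Icc (0 : ℝ) 1)
    (N : ℕ) (hN : 1 ≤ N)
    (p : Fin N → (Fin (d 0) → ℝ) → Fin (d (L + 1)) → ℝ)
    (q : (Fin (d 0) → ℝ) → Fin (d (L + 1)) → ℝ)
    (hpm : ∀ k, Measurable (p k)) (hqm : Measurable q)
    (hp0 : ∀ k x i, 0 ≤ p k x i) (hq0 : ∀ x i, 0 ≤ q x i)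
    (hp1 : ∀ k, ∀ᵐ x ∂ν, ∑ i, p k x i = 1) (hq1 : ∀ᵐ x ∂ν, ∑ i, q x i = 1)
    (n : Fin N → ℕ) (hn : ∀ k, 0 < n k)
    (C₀ : ℝ) (hC₀ : 0 ≤ C₀) (E : ℕ)
    (hpoly : ∀ t : ℕ, 1 ≤ t → pathNormProxy L d (θ t) ≤ C₀ * (t : ℝ) ^ (E * L)) :
    ∀ t : ℕ, 1 ≤ t →
      |∑ k, ((n k : ℝ) / (∑ j, (n j : ℝ))) * risk ν (fun x => preact d (θ t) x L) (p k)
          - risk ν (fun x => preact d (θ t) x L) q|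
        ≤ C₀ * (t : ℝ) ^ (E * L) * ∑ k, ((n k : ℝ) / (∑ j, (n j : ℝ))) *
            ∫ x, ∑ i, |p k x i - q x i| ∂ν :=
  generalization_error_bound_poly_rounds_general L d hC θ ν hν N hN p q hpm hqm hp0 hq0 hp1 hq1 n hn
    C₀ E hpoly
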